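/- arXiv:1812.06119 — 6 statements merged into one kernel-verified Lean document; each statement's English description precedes it below -/
import Mathlib

section
/- For every integer k ≥ 2, the sum over j from 1 to k−1 of 1/sin²(jπ/k) equals (k²−1)/3. -/
/-!
With `μ = exp (2πi/k)` and `x_j = (1 - μ^j)⁻¹`, one has `1 / sin² (jπ/k) = 4 (x_j - x_j²)`.
The `μ^j` with `0 < j < k` are the roots of `1 + X + ⋯ + X^(k-1)`, so `∑ x_j` and `∑ x_j²` are
read off from the first two derivatives of this polynomial at `1`: `∑ x_j = (k-1)/2` and
`∑ x_j² = (k-1)(5-k)/12`.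
-/

open Finset Polynomial

namespace Polynomial

section LogDeriv

variable {K ι : Type*} [Field K] {s : Finset ι} {a : ι → K} {z : K}

theorem eval_derivative_prod_X_sub_C (hz : ∀ i ∈ s, z ≠ a i) :
    eval z (derivative (∏ i ∈ s, (X - C (a i)))) =
      eval z (∏ i ∈ s, (X - C (a i))) * ∑ i ∈ s, (z - a i)⁻¹ := by
  induction s using Finset.cons_induction with
  | empty => simp
  | cons b s hb ih =>
    have hb' : z - a b ≠ 0 := sub_ne_zero.mpr (hz b (mem_cons_self b s))
    rw [prod_cons, sum_cons, derivative_mul, eval_add, eval_mul, eval_mul, eval_mul,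
      ih fun i hi ↦ hz i (mem_cons_of_mem hi)]
    simp only [derivative_X_sub_C, eval_one, eval_sub, eval_X, eval_C]
    field_simp

theorem eval_derivative_derivative_prod_X_sub_C (hz : ∀ i ∈ s, z ≠ a i) :
    eval z (derivative (derivative (∏ i ∈ s, (X - C (a i))))) =
      eval z (∏ i ∈ s, (X - C (a i))) *
        ((∑ i ∈ s, (z - a i)⁻¹) ^ 2 - ∑ i ∈ s, (z - a i)⁻¹ ^ 2) := by
  induction s using Finset.cons_induction with
  | empty => simp
  | cons b s hb ih =>
    have hz' : ∀ i ∈ s, z ≠ a i := fun i hi ↦ hz i (mem_cons_of_mem hi)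
    have hb' : z - a b ≠ 0 := sub_ne_zero.mpr (hz b (mem_cons_self b s))
    rw [prod_cons, sum_cons, sum_cons, derivative_mul, derivative_add, derivative_mul,
      derivative_mul]
    simp only [derivative_X_sub_C, derivative_one, eval_add, eval_mul, eval_one, eval_zero,
      eval_sub, eval_X, eval_C, ih hz', eval_derivative_prod_X_sub_C hz']
    field_simp
    ring

end LogDeriv

section GeomSum

variable {R : Type*} [CommRing R]

theorem two_mul_eval_one_derivative_geom_sum (k : ℕ) :
    2 * eval 1 (derivative (∑ i ∈ range k, (X : R[X]) ^ i)) = k * (k - 1) := by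
  induction k with
  | zero => simp
  | succ k ih =>
    rw [sum_range_succ, derivative_add, eval_add, mul_add, ih]
    simp only [derivative_X_pow, eval_mul, eval_C, eval_pow, eval_X, one_pow, mul_one]
    push_cast
    ring

theorem three_mul_eval_one_derivative_derivative_geom_sum (k : ℕ) :
    3 * eval 1 (derivative (derivative (∑ i ∈ range k, (X : R[X]) ^ i))) =
      k * (k - 1) * (k - 2) := by
  induction k with
  | zero => simp
  | succ k ih =>
    rw [sum_range_succ, derivative_add, derivative_add, eval_add, mul_add, ih]
    simp only [derivative_X_pow, derivative_C_mul, eval_mul, eval_C, eval_pow, eval_X, one_pow,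
      mul_one]
    rcases k with _ | k
    · simp
    · push_cast [Nat.add_sub_cancel]
      ring

end GeomSum

end Polynomial

namespace IsPrimitiveRoot

theorem one_ne_pow_succ {M : Type*} [CommMonoid M] {n : ℕ} {μ : M}
    (hμ : IsPrimitiveRoot μ (n + 1)) : ∀ j ∈ range n, (1 : M) ≠ μ ^ (j + 1) :=
  fun j hj ↦ (hμ.pow_ne_one_of_pos_of_lt j.succ_ne_zero (by simpa using hj)).symm

theorem prod_X_sub_C_pow_eq_geom_sum {R : Type*} [CommRing R] [IsDomain R] {n : ℕ} {μ : R}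
    (hμ : IsPrimitiveRoot μ (n + 1)) :
    ∏ j ∈ range n, (X - C (μ ^ (j + 1))) = ∑ i ∈ range (n + 1), (X : R[X]) ^ i := by
  have := X_pow_sub_C_eq_prod hμ n.zero_lt_succ (one_pow (n + 1))
  rw [C_1, ← mul_geom_sum, prod_range_succ', pow_zero, mul_one, mul_comm, eq_comm] at this
  simpa using mul_right_cancel₀ (X_sub_C_ne_zero 1) this

variable {K : Type*} [Field K] [CharZero K] {n : ℕ} {μ : K}

theorem sum_inv_one_sub_pow (hμ : IsPrimitiveRoot μ (n + 1)) :
    ∑ j ∈ range n, (1 - μ ^ (j + 1))⁻¹ = n / 2 := by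
  have h := eval_derivative_prod_X_sub_C hμ.one_ne_pow_succ
  have h' := two_mul_eval_one_derivative_geom_sum (R := K) (n + 1)
  rw [hμ.prod_X_sub_C_pow_eq_geom_sum, eval_geom_sum] at h
  simp only [one_pow, sum_const, card_range, nsmul_eq_mul, mul_one] at h
  rw [h] at h'
  push_cast at h'
  refine mul_left_cancel₀ (Nat.cast_add_one_ne_zero n) ?_
  linear_combination h' / 2

theorem sum_inv_one_sub_pow_sq (hμ : IsPrimitiveRoot μ (n + 1)) :
    ∑ j ∈ range n, (1 - μ ^ (j + 1))⁻¹ ^ 2 = n * (4 - n) / 12 := by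
  have h := eval_derivative_derivative_prod_X_sub_C hμ.one_ne_pow_succ
  have h' := three_mul_eval_one_derivative_derivative_geom_sum (R := K) (n + 1)
  rw [hμ.prod_X_sub_C_pow_eq_geom_sum, eval_geom_sum, hμ.sum_inv_one_sub_pow] at h
  simp only [one_pow, sum_const, card_range, nsmul_eq_mul, mul_one] at h
  rw [h] at h'
  push_cast at h'
  refine mul_left_cancel₀ (Nat.cast_add_one_ne_zero n) ?_
  linear_combination -h' / 3

end IsPrimitiveRoot

namespace Complex

-- When `exp (2 * z * I) = 1` both sides are `0`, so no hypothesis is needed.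
theorem inv_sin_sq (z : ℂ) :
    (sin z ^ 2)⁻¹ = 4 * ((1 - exp (2 * z * I))⁻¹ - (1 - exp (2 * z * I))⁻¹ ^ 2) := by
  have hsin : 2 * sin z * I * exp (z * I) = exp (z * I) ^ 2 - 1 := by
    rw [two_sin, neg_mul, exp_neg]
    field_simp
    linear_combination (1 - exp (z * I) ^ 2) * I_sq
  have hw : exp (2 * z * I) = exp (z * I) ^ 2 := by rw [← exp_nat_mul]; ring_nf
  rw [hw]
  set e := exp (z * I)
  rcases eq_or_ne (e ^ 2) 1 with h1 | h1
  · have : sin z = 0 := by simpa [h1, e, exp_ne_zero] using hsin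
    simp [this, h1]
  · have h1' : 1 - e ^ 2 ≠ 0 := sub_ne_zero.mpr h1.symm
    have hs : sin z ≠ 0 := by
      rintro hs
      exact h1 (sub_eq_zero.mp (by simpa [hs] using hsin.symm))
    field_simp
    linear_combination (-(2 * sin z * I * e) - e ^ 2 + 1) * hsin + 4 * sin z ^ 2 * e ^ 2 * I_sq

end Complex

open Real

theorem stmt_0 (k : ℕ) (hk : 2 ≤ k) :
    ∑ j ∈ Finset.Icc 1 (k - 1), (1 / Real.sin (j * Real.pi / k) ^ 2)
      = ((k : ℝ) ^ 2 - 1) / 3 := by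
  obtain ⟨n, rfl⟩ : ∃ n, k = n + 1 := ⟨k - 1, by omega⟩
  set μ := Complex.exp (2 * π * Complex.I / (n + 1 : ℕ))
  have hμ : IsPrimitiveRoot μ (n + 1) := Complex.isPrimitiveRoot_exp (n + 1) n.succ_ne_zero
  have hterm (j : ℕ) : ((1 / sin ((1 + j : ℕ) * π / (n + 1 : ℕ)) ^ 2 : ℝ) : ℂ) =
      4 * ((1 - μ ^ (j + 1))⁻¹ - (1 - μ ^ (j + 1))⁻¹ ^ 2) := by
    rw [← Complex.exp_nat_mul, one_div, Complex.ofReal_inv, Complex.ofReal_pow,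
      Complex.ofReal_sin, Complex.inv_sin_sq]
    push_cast
    ring_nf
  rw [Nat.add_sub_cancel, ← Ico_add_one_right_eq_Icc, sum_Ico_eq_sum_range, Nat.add_sub_cancel]
  apply Complex.ofReal_injective
  rw [Complex.ofReal_sum]
  simp only [hterm]
  rw [← mul_sum, sum_sub_distrib, hμ.sum_inv_one_sub_pow, hμ.sum_inv_one_sub_pow_sq]
  push_cast
  ring
end

section
/- For every integer k ≥ 2, the sum over j from 1 to k−1 of 1/sin⁴(jπ/k) equals (k⁴−1)/45 + 2(k²−1)/9. -/
/-!
Put `μ = exp (2πi/k)` and `v_j = (1 - μ^j)⁻¹`. Then `v_j (1 - v_j) = 1 / (4 sin² (jπ/k))`, so the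
sum is `16 ∑ (v_j - v_j²)² = 16 (p₂ - 2 p₃ + p₄)` in terms of the power sums `p_r` of the `v_j`.
The `-v_j` are the roots of `(X + 1)^k - X^k`, i.e. `k ∏ (X + v_j) = (X + 1)^k - X^k`, so the
elementary symmetric functions of the `v_j` are `e_i = (k choose (i + 1)) / k`, and Newton's
identities turn them into the power sums.
-/

open Polynomial Finset

namespace Multiset

variable {R : Type*}

section CommSemiring

variable [CommSemiring R]

@[simp]
theorem esymm_zero (s : Multiset R) : s.esymm 0 = 1 := by
  simp [esymm]

theorem esymm_eq_zero_of_card_lt {s : Multiset R} {n : ℕ} (h : card s < n) : s.esymm n = 0 := by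
  simp [esymm, powersetCard_eq_empty _ h]

@[simp]
theorem zero_esymm_succ (n : ℕ) : (0 : Multiset R).esymm (n + 1) = 0 :=
  esymm_eq_zero_of_card_lt (by simp)

theorem esymm_cons_succ (a : R) (s : Multiset R) (n : ℕ) :
    (a ::ₘ s).esymm (n + 1) = s.esymm (n + 1) + a * s.esymm n := by
  simp [esymm, powersetCard_cons, map_map, sum_map_mul_left]

end CommSemiring

variable [CommRing R]

theorem sum_map_pow_two (s : Multiset R) :
    (s.map (· ^ 2)).sum = s.esymm 1 ^ 2 - 2 * s.esymm 2 := by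
  induction s using Multiset.induction with
  | empty => simp
  | cons a s ih => simp only [map_cons, sum_cons, esymm_cons_succ, ih, esymm_zero]; ring

theorem sum_map_pow_three (s : Multiset R) :
    (s.map (· ^ 3)).sum = s.esymm 1 ^ 3 - 3 * s.esymm 1 * s.esymm 2 + 3 * s.esymm 3 := by
  induction s using Multiset.induction with
  | empty => simp
  | cons a s ih => simp only [map_cons, sum_cons, esymm_cons_succ, ih, esymm_zero]; ring

theorem sum_map_pow_four (s : Multiset R) :
    (s.map (· ^ 4)).sum = s.esymm 1 ^ 4 - 4 * s.esymm 1 ^ 2 * s.esymm 2 + 2 * s.esymm 2 ^ 2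
      + 4 * s.esymm 1 * s.esymm 3 - 4 * s.esymm 4 := by
  induction s using Multiset.induction with
  | empty => simp
  | cons a s ih => simp only [map_cons, sum_cons, esymm_cons_succ, ih, esymm_zero]; ring

end Multiset

theorem IsPrimitiveRoot.prod_add_one_sub_mul_pow {R : Type*} [CommRing R] [IsDomain R] {n : ℕ}
    {μ : R} (hμ : IsPrimitiveRoot μ (n + 1)) (x : R) :
    ∏ j ∈ range n, (x + 1 - x * μ ^ (j + 1)) = (x + 1) ^ (n + 1) - x ^ (n + 1) := by
  have h := congrArg (eval (x + 1)) (X_pow_sub_C_eq_prod hμ n.succ_pos (α := x) rfl)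
  rw [prod_range_succ'] at h
  simpa [eval_prod, mul_comm] using h.symm

variable {K : Type*} [Field K] {n : ℕ} {μ : K}

noncomputable def oneSubPowInv (μ : K) (n : ℕ) : Multiset K :=
  (range n).val.map fun j => (1 - μ ^ (j + 1))⁻¹

theorem card_oneSubPowInv : Multiset.card (oneSubPowInv μ n) = n := by
  simp [oneSubPowInv]

theorem IsPrimitiveRoot.one_sub_pow_succ_ne_zero (hμ : IsPrimitiveRoot μ (n + 1)) {j : ℕ}
    (hj : j < n) : 1 - μ ^ (j + 1) ≠ 0 :=
  sub_ne_zero.mpr (hμ.pow_ne_one_of_pos_of_lt j.succ_ne_zero (by omega)).symm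

theorem IsPrimitiveRoot.C_mul_prod_X_add_C_oneSubPowInv (hμ : IsPrimitiveRoot μ (n + 1)) :
    C ((n : K) + 1) * ((oneSubPowInv μ n).map (X + C ·)).prod
      = (X + 1) ^ (n + 1) - X ^ (n + 1) := by
  have hCμ : IsPrimitiveRoot (C μ) (n + 1) := hμ.map_of_injective C_injective
  rw [← hCμ.prod_add_one_sub_mul_pow, ← hμ.prod_one_sub_pow_eq_order, oneSubPowInv,
    Multiset.map_map]
  change C (∏ j ∈ range n, _) * ∏ j ∈ range n, _ = _
  rw [map_prod, ← prod_mul_distrib]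
  refine prod_congr rfl fun j hj => ?_
  have h := hμ.one_sub_pow_succ_ne_zero (mem_range.mp hj)
  rw [Function.comp_apply, mul_add, ← C_mul, mul_inv_cancel₀ h, C_1]
  simp only [map_sub, map_one, map_pow]
  ring

theorem IsPrimitiveRoot.natCast_succ_mul_esymm_oneSubPowInv (hμ : IsPrimitiveRoot μ (n + 1))
    (i : ℕ) : ((n : K) + 1) * (oneSubPowInv μ n).esymm i = (n + 1).choose (i + 1) := by
  rcases le_or_gt i n with hi | hi
  · have h := congrArg (coeff · (n - i)) hμ.C_mul_prod_X_add_C_oneSubPowInv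
    simp only [coeff_C_mul, coeff_sub, coeff_X_add_one_pow, coeff_X_pow] at h
    rw [Multiset.prod_X_add_C_coeff _ (by rw [card_oneSubPowInv]; omega), card_oneSubPowInv,
      Nat.sub_sub_self hi, if_neg (by omega), sub_zero] at h
    rw [h, Nat.choose_symm_of_eq_add (show n + 1 = n - i + (i + 1) by omega)]
  · rw [Multiset.esymm_eq_zero_of_card_lt (by rwa [card_oneSubPowInv]),
      Nat.choose_eq_zero_of_lt (by omega)]
    simp

theorem IsPrimitiveRoot.sum_map_mul_one_sub_sq_oneSubPowInv [CharZero K]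
    (hμ : IsPrimitiveRoot μ (n + 1)) :
    ((oneSubPowInv μ n).map fun v => (v * (1 - v)) ^ 2).sum
      = (((n : K) + 1) ^ 2 - 1) * (((n : K) + 1) ^ 2 + 11) / 720 := by
  set s := oneSubPowInv μ n
  have hpow : (s.map fun v => (v * (1 - v)) ^ 2).sum
      = (s.map (· ^ 2)).sum - 2 * (s.map (· ^ 3)).sum + (s.map (· ^ 4)).sum := by
    rw [← Multiset.sum_map_mul_left, ← Multiset.sum_map_sub, ← Multiset.sum_map_add]
    exact congrArg _ (Multiset.map_congr rfl fun v _ => by ring)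
  have hn : (n : K) + 1 ≠ 0 := by exact_mod_cast n.succ_ne_zero
  have he (i : ℕ) : s.esymm i = ((n + 1).choose (i + 1) : K) / (n + 1) := by
    rw [eq_div_iff hn, mul_comm, hμ.natCast_succ_mul_esymm_oneSubPowInv]
  rw [hpow, Multiset.sum_map_pow_two, Multiset.sum_map_pow_three, Multiset.sum_map_pow_four,
    he, he, he, he]
  simp only [Nat.cast_choose_eq_descPochhammer_div, descPochhammer_succ_eval, descPochhammer_zero,
    eval_one, Nat.factorial]
  push_cast
  field_simp
  ring

theorem Finset.sum_Icc_one_eq_sum_range {M : Type*} [AddCommMonoid M] (f : ℕ → M) (n : ℕ) :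
    ∑ j ∈ Icc 1 n, f j = ∑ j ∈ range n, f (j + 1) := by
  rw [range_eq_Ico, sum_Ico_add', ← Ico_add_one_right_eq_Icc]

open Complex in
theorem inv_one_sub_cexp_mul_one_sub_inv (θ : ℝ) :
    (1 - cexp (2 * θ * I))⁻¹ * (1 - (1 - cexp (2 * θ * I))⁻¹) = ((4 * Real.sin θ ^ 2)⁻¹ : ℝ) := by
  set E := cexp (θ * I) with hE
  have hE0 : E ≠ 0 := exp_ne_zero _
  have hexp : cexp (2 * θ * I) = E ^ 2 := by rw [hE, ← exp_nat_mul]; ring_nf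
  have hsin : Complex.sin θ = (E⁻¹ - E) * I / 2 := by
    rw [Complex.sin, neg_mul, exp_neg]
  rw [hexp]
  push_cast
  rw [hsin]
  by_cases h : E ^ 2 = 1
  · -- `sin θ = 0`: both sides are the junk value `0⁻¹ = 0`
    have : E⁻¹ - E = 0 := by field_simp; linear_combination -h
    simp [h, this]
  · have h' : 1 - E ^ 2 ≠ 0 := sub_ne_zero.mpr (Ne.symm h)
    have h'' : E ^ 2 - 1 ≠ 0 := sub_ne_zero.mpr h
    field_simp
    rw [I_sq]
    ring

open Complex in
theorem stmt_1 (k : ℕ) (hk : 2 ≤ k) :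
    ∑ j ∈ Finset.Icc 1 (k - 1), (1 / Real.sin (j * Real.pi / k) ^ 4)
      = ((k : ℝ) ^ 4 - 1) / 45 + 2 * ((k : ℝ) ^ 2 - 1) / 9 := by
  obtain ⟨n, rfl⟩ : ∃ n, k = n + 1 := ⟨k - 1, by omega⟩
  set μ := cexp (2 * Real.pi * I / (n + 1 : ℕ))
  have hμ : IsPrimitiveRoot μ (n + 1) := isPrimitiveRoot_exp (n + 1) n.succ_ne_zero
  have hterm (j : ℕ) : ((1 / Real.sin ((j + 1 : ℕ) * Real.pi / (n + 1 : ℕ)) ^ 4 : ℝ) : ℂ)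
      = 16 * ((1 - μ ^ (j + 1))⁻¹ * (1 - (1 - μ ^ (j + 1))⁻¹)) ^ 2 := by
    have hμj : μ ^ (j + 1) = cexp (2 * ((j + 1 : ℕ) * Real.pi / (n + 1 : ℕ) : ℝ) * I) := by
      rw [← exp_nat_mul]; push_cast; ring_nf
    rw [hμj, inv_one_sub_cexp_mul_one_sub_inv]
    push_cast
    ring
  apply ofReal_injective
  rw [Nat.add_sub_cancel, sum_Icc_one_eq_sum_range, ofReal_sum]
  simp_rw [hterm, ← mul_sum]
  have key : ∑ j ∈ range n, ((1 - μ ^ (j + 1))⁻¹ * (1 - (1 - μ ^ (j + 1))⁻¹)) ^ 2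
      = (((n : ℂ) + 1) ^ 2 - 1) * (((n : ℂ) + 1) ^ 2 + 11) / 720 := by
    rw [← hμ.sum_map_mul_one_sub_sq_oneSubPowInv, oneSubPowInv, Multiset.map_map]
    rfl
  rw [key]
  push_cast
  ring
end

section
/- For every integer k ≥ 2, the sum over j from 1 to k−1 of 1/sin⁶(jπ/k) equals 2(k⁶−1)/945 + (k⁴−1)/45 + 8(k²−1)/45. -/
/-!
For `k = n + 1` and a primitive `k`-th root of unity `μ`, the numbers `vⱼ = 1 / (1 - μʲ)`,
`1 ≤ j ≤ n`, are the roots of `(X ^ k - (X - 1) ^ k) / k`, so by Vieta their elementary symmetric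
functions are `eₘ = C(n, m) / (m + 1)`, and Newton's identities give the power sums `pₘ = ∑ vⱼ ^ m`
as polynomials in `n`. With `μ = exp (2πi / k)` one has `4 vⱼ (1 - vⱼ) = 1 / sin² (jπ / k)`, hence
`∑ 1 / sin⁶ (jπ / k) = 64 (p₃ - 3 p₄ + 3 p₅ - p₆)`.
-/

open Polynomial Finset

theorem IsPrimitiveRoot.pow_sub_pow_eq_prod_range {R : Type*} [CommRing R] [IsDomain R]
    {ζ : R} {m : ℕ} (hζ : IsPrimitiveRoot ζ m) (hm : 0 < m) (x y : R) :
    x ^ m - y ^ m = ∏ i ∈ range m, (x - ζ ^ i * y) := by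
  simpa [eval_prod] using congrArg (eval x) (X_pow_sub_C_eq_prod hζ hm (rfl : y ^ m = y ^ m))

theorem Fintype.sum_pow_eq_mul_esymm_sub_sum {R σ : Type*} [CommRing R] [Fintype σ] (x : σ → R)
    {m : ℕ} (hm : 0 < m) :
    ∑ i, x i ^ m = (-1) ^ (m + 1) * m * (univ.val.map x).esymm m -
      ∑ a ∈ antidiagonal m with a.1 ∈ Set.Ioo 0 m,
        (-1) ^ a.1 * (univ.val.map x).esymm a.1 * ∑ i, x i ^ a.2 := by
  have h := congrArg (MvPolynomial.aeval x) (MvPolynomial.psum_eq_mul_esymm_sub_sum σ R m hm)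
  simpa only [MvPolynomial.psum, MvPolynomial.aeval_esymm_eq_multiset_esymm, MvPolynomial.aeval_X,
    map_sub, map_mul, map_sum, map_pow, map_neg, map_one, map_natCast] using h

theorem power_sum_combination_of_esymm_eq_choose_div {K : Type*} [Field K] [CharZero K] {n : ℕ}
    {e p : ℕ → K} (he : ∀ m, e m = n.choose m / (m + 1))
    (newton : ∀ m, 0 < m → p m = (-1) ^ (m + 1) * m * e m -
      ∑ a ∈ antidiagonal m with a.1 ∈ Set.Ioo 0 m, (-1) ^ a.1 * e a.1 * p a.2) :
    64 * (p 3 - 3 * p 4 + 3 * p 5 - p 6) =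
      2 * (((n + 1 : ℕ) : K) ^ 6 - 1) / 945 + (((n + 1 : ℕ) : K) ^ 4 - 1) / 45 +
        8 * (((n + 1 : ℕ) : K) ^ 2 - 1) / 45 := by
  have p1 : p 1 = n / 2 := by
    simp [newton 1, sum_filter, Nat.sum_antidiagonal_eq_sum_range_succ_mk, sum_range_succ, he]
    ring
  have p2 : p 2 = n / 3 - n ^ 2 / 12 := by
    simp [newton 2, sum_filter, Nat.sum_antidiagonal_eq_sum_range_succ_mk, sum_range_succ, he,
      Nat.cast_choose_eq_descPochhammer_div, descPochhammer_succ_eval, Nat.factorial, p1]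
    ring
  have p3 : p 3 = n / 4 - n ^ 2 / 8 := by
    simp [newton 3, sum_filter, Nat.sum_antidiagonal_eq_sum_range_succ_mk, sum_range_succ, he,
      Nat.cast_choose_eq_descPochhammer_div, descPochhammer_succ_eval, Nat.factorial, p1, p2]
    ring
  have p4 : p 4 = n / 5 - 13 * n ^ 2 / 90 + n ^ 3 / 180 + n ^ 4 / 720 := by
    simp [newton 4, sum_filter, Nat.sum_antidiagonal_eq_sum_range_succ_mk, sum_range_succ, he,
      Nat.cast_choose_eq_descPochhammer_div, descPochhammer_succ_eval, Nat.factorial, p1, p2, p3]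
    ring
  have p5 : p 5 = n / 6 - 11 * n ^ 2 / 72 + n ^ 3 / 72 + n ^ 4 / 288 := by
    simp [newton 5, sum_filter, Nat.sum_antidiagonal_eq_sum_range_succ_mk, sum_range_succ, he,
      Nat.cast_choose_eq_descPochhammer_div, descPochhammer_succ_eval, Nat.factorial, p1, p2, p3,
      p4]
    ring
  have p6 : p 6 = n / 7 - 87 * n ^ 2 / 560 + 347 * n ^ 3 / 15120 + 109 * n ^ 4 / 20160
      - n ^ 5 / 5040 - n ^ 6 / 30240 := by
    simp [newton 6, sum_filter, Nat.sum_antidiagonal_eq_sum_range_succ_mk, sum_range_succ, he,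
      Nat.cast_choose_eq_descPochhammer_div, descPochhammer_succ_eval, Nat.factorial, p1, p2, p3,
      p4, p5]
    ring
  rw [p3, p4, p5, p6]
  push_cast
  ring

namespace IsPrimitiveRoot

variable {K : Type*} [Field K] {n : ℕ} {μ : K}

theorem X_pow_sub_X_sub_one_pow_eq_C_mul_prod (hμ : IsPrimitiveRoot μ (n + 1)) :
    X ^ (n + 1) - (X - 1) ^ (n + 1) =
      C ((n + 1 : ℕ) : K) * ∏ j ∈ range n, (X - C (1 - μ ^ (j + 1))⁻¹) := by
  have hC : IsPrimitiveRoot (C μ) (n + 1) := hμ.map_of_injective C_injective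
  have hfactor (j : ℕ) (hj : j < n) :
      (X - 1 : K[X]) - C μ ^ (j + 1) * X =
        C (1 - μ ^ (j + 1)) * (X - C (1 - μ ^ (j + 1))⁻¹) := by
    have : 1 - μ ^ (j + 1) ≠ 0 :=
      sub_ne_zero.2 (hμ.pow_ne_one_of_pos_of_lt j.succ_ne_zero (by omega)).symm
    rw [mul_sub, ← C_mul, mul_inv_cancel₀ this]
    simp only [map_one, map_sub, map_pow]
    ring
  rw [← neg_sub, hC.pow_sub_pow_eq_prod_range n.succ_pos, prod_range_succ',
    prod_congr rfl fun j hj => hfactor j (mem_range.1 hj), prod_mul_distrib, ← map_prod,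
    hμ.prod_one_sub_pow_eq_order]
  simp

theorem succ_mul_esymm_inv_one_sub_pow (hμ : IsPrimitiveRoot μ (n + 1)) (m : ℕ) :
    ((m + 1 : ℕ) : K) * (univ.val.map fun i : Fin n => (1 - μ ^ ((i : ℕ) + 1))⁻¹).esymm m =
      n.choose m := by
  set s := univ.val.map fun i : Fin n => (1 - μ ^ ((i : ℕ) + 1))⁻¹
  have hs : Multiset.card s = n := by simp [s]
  have hvieta : ((n + 1 : ℕ) : K) * s.esymm m = (n + 1).choose (m + 1) := by
    rcases le_or_gt m n with hmn | hnm
    swap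
    · rw [Multiset.esymm, Multiset.powersetCard_eq_empty _ (hs ▸ hnm),
        Nat.choose_eq_zero_of_lt (by omega)]
      simp
    have hcoeff := congrArg (coeff · (n - m)) hμ.X_pow_sub_X_sub_one_pow_eq_C_mul_prod
    have hprod : ∏ j ∈ range n, (X - C (1 - μ ^ (j + 1))⁻¹) = (s.map (X - C ·)).prod := by
      rw [← Fin.prod_univ_eq_prod_range (fun j => X - C (1 - μ ^ (j + 1))⁻¹),
        prod_eq_multiset_prod, Multiset.map_map]
      rfl
    rw [coeff_sub, coeff_X_pow, coeff_C_mul, hprod, Multiset.prod_X_sub_C_coeff s (by omega), hs,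
      Nat.sub_sub_self hmn, sub_eq_add_neg X 1, ← C_1, ← C_neg, coeff_X_add_C_pow,
      if_neg (by omega),
      Nat.choose_symm_of_eq_add (by omega : n + 1 = n - m + (m + 1)),
      (by omega : n + 1 - (n - m) = m + 1)] at hcoeff
    apply mul_left_cancel₀ (pow_ne_zero m (neg_ne_zero.2 one_ne_zero) : (-1 : K) ^ m ≠ 0)
    linear_combination -hcoeff
  have hN : ((n + 1 : ℕ) : K) ≠ 0 := (hμ.neZero' (R := K)).out
  apply mul_left_cancel₀ hN
  rw [mul_left_comm, hvieta, ← Nat.cast_mul, ← Nat.cast_mul, Nat.add_one_mul_choose_eq, mul_comm]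

theorem sum_four_mul_inv_one_sub_pow_mul_cube [CharZero K] (hμ : IsPrimitiveRoot μ (n + 1)) :
    ∑ j ∈ range n, (4 * ((1 - μ ^ (j + 1))⁻¹ * (1 - (1 - μ ^ (j + 1))⁻¹))) ^ 3 =
      2 * (((n + 1 : ℕ) : K) ^ 6 - 1) / 945 + (((n + 1 : ℕ) : K) ^ 4 - 1) / 45 +
        8 * (((n + 1 : ℕ) : K) ^ 2 - 1) / 45 := by
  set v : Fin n → K := fun i => (1 - μ ^ ((i : ℕ) + 1))⁻¹
  have hexpand : ∑ i, (4 * (v i * (1 - v i))) ^ 3 =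
      64 * (∑ i, v i ^ 3 - 3 * ∑ i, v i ^ 4 + 3 * ∑ i, v i ^ 5 - ∑ i, v i ^ 6) := by
    simp only [mul_sum, ← sum_sub_distrib, ← sum_add_distrib]
    exact sum_congr rfl fun i _ => by ring
  rw [← Fin.sum_univ_eq_sum_range
    (fun j => (4 * ((1 - μ ^ (j + 1))⁻¹ * (1 - (1 - μ ^ (j + 1))⁻¹))) ^ 3), hexpand]
  refine power_sum_combination_of_esymm_eq_choose_div (e := fun m => (univ.val.map v).esymm m)
    (fun m => ?_) fun m hm => Fintype.sum_pow_eq_mul_esymm_sub_sum v hm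
  rw [eq_div_iff (Nat.cast_add_one_ne_zero m), mul_comm]
  exact_mod_cast hμ.succ_mul_esymm_inv_one_sub_pow m

end IsPrimitiveRoot

theorem Complex.inv_sin_sq_eq_four_mul_inv_one_sub_exp (θ : ℂ) (h : sin θ ≠ 0) :
    (sin θ ^ 2)⁻¹ = 4 * ((1 - exp (2 * θ * I))⁻¹ * (1 - (1 - exp (2 * θ * I))⁻¹)) := by
  have hu : exp (θ * I) ≠ 0 := exp_ne_zero _
  have hexp : exp (2 * θ * I) = exp (θ * I) ^ 2 := by rw [← exp_nat_mul]; ring_nf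
  have hsin : sin θ = (1 - exp (θ * I) ^ 2) * I / (2 * exp (θ * I)) := by
    rw [sin, neg_mul, exp_neg]; field_simp
  rw [hsin] at h ⊢
  have h1 : 1 - exp (θ * I) ^ 2 ≠ 0 := by rintro h'; simp [h'] at h
  rw [hexp]
  field_simp
  linear_combination (4 * exp (θ * I) ^ 2) * I_sq

open Real

theorem stmt_2 (k : ℕ) (hk : 2 ≤ k) :
    ∑ j ∈ Finset.Icc 1 (k - 1), (1 / Real.sin (j * Real.pi / k) ^ 6)
      = 2 * ((k : ℝ) ^ 6 - 1) / 945 + ((k : ℝ) ^ 4 - 1) / 45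
        + 8 * ((k : ℝ) ^ 2 - 1) / 45 := by
  obtain ⟨n, rfl⟩ : ∃ n, k = n + 1 := ⟨k - 1, by omega⟩
  set μ := Complex.exp (2 * π * Complex.I / (n + 1 : ℕ))
  have hμ : IsPrimitiveRoot μ (n + 1) := Complex.isPrimitiveRoot_exp (n + 1) n.succ_ne_zero
  have hterm (j : ℕ) (hj : j < n) : ((1 / sin ((1 + j : ℕ) * π / (n + 1 : ℕ)) ^ 6 : ℝ) : ℂ) =
      (4 * ((1 - μ ^ (j + 1))⁻¹ * (1 - (1 - μ ^ (j + 1))⁻¹))) ^ 3 := by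
    set θ : ℝ := (1 + j : ℕ) * π / (n + 1 : ℕ)
    have hθ : 0 < sin θ := sin_pos_of_pos_of_lt_pi (by positivity) (by
      rw [div_lt_iff₀ (by positivity), mul_comm π]
      exact mul_lt_mul_of_pos_right (by exact_mod_cast (by omega : 1 + j < n + 1)) pi_pos)
    have hμj : μ ^ (j + 1) = Complex.exp (2 * (θ : ℂ) * Complex.I) := by
      rw [← Complex.exp_nat_mul]
      push_cast [θ]
      ring_nf
    rw [hμj, ← Complex.inv_sin_sq_eq_four_mul_inv_one_sub_exp _ (by exact_mod_cast hθ.ne')]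
    push_cast
    ring
  apply Complex.ofReal_injective
  rw [Nat.add_sub_cancel, ← Ico_add_one_right_eq_Icc, sum_Ico_eq_sum_range, Nat.add_sub_cancel,
    Complex.ofReal_sum, sum_congr rfl fun j hj => hterm j (mem_range.1 hj),
    hμ.sum_four_mul_inv_one_sub_pow_mul_cube]
  push_cast
  ring
end

section
/- Let k ≥ 2 be an integer and define, for j = 1, …, k−1, the numbers s_j := sin(jπ/k). Then (1/k)·∑_{j=1}^{k−1} [ 12/(64·s_j⁶) − 2/(16·s_j⁴) ] = (1/2520)(k⁵ − 1/k) + (1/720)(k³ − 1/k) + (1/180)(k − 1/k), and (1/k)·∑_{j=1}^{k−1} [ 2/(64·s_j⁶) ] = (1/15120)(k⁵ − 1/k) + (1/1440)(k³ − 1/k) + (1/180)(k − 1/k). -/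
/-!
For a `k`-th root of unity `ω ≠ 1` put `t = (1 - ω)⁻¹`. If `ω = exp (2πij/k)` then
`t - t² = 1 / (4 sin² (jπ/k))`, and the `k - 1` numbers `t` are the roots of
`(X ^ k - (X - 1) ^ k) / k`, so their elementary symmetric functions are `C(k, m + 1) / k`.
Newton's identities turn these into the power sums of the `t` up to the sixth, as polynomials
in `k`, and the sums of `1 / sin⁴` and `1 / sin⁶` are combinations of those power sums.
-/

open Polynomial Finset

theorem Finset.mul_esymm_map_val_eq_sum {ι R : Type*} [CommRing R] (s : Finset ι) (f : ι → R)
    (m : ℕ) :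
    m * (s.val.map f).esymm m = (-1) ^ (m + 1) *
      ∑ i ∈ range m, (-1) ^ i * (s.val.map f).esymm i * ∑ x ∈ s, f x ^ (m - i) := by
  have h := congrArg (MvPolynomial.aeval fun x : s ↦ f x) (MvPolynomial.mul_esymm_eq_sum s R m)
  have hval : (univ : Finset s).val.map (fun x : s ↦ f x) = s.val.map f :=
    Multiset.attach_map_val' s.val f
  simp only [map_mul, map_pow, map_neg, map_one, map_natCast, map_sum,
    MvPolynomial.aeval_esymm_eq_multiset_esymm, hval, MvPolynomial.psum, MvPolynomial.aeval_X] at h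
  rw [sum_filter, Nat.sum_antidiagonal_eq_sum_range_succ_mk, sum_range_succ] at h
  simp only [lt_self_iff_false, if_false, add_zero] at h
  rw [h]
  congr 1
  refine sum_congr rfl fun i hi ↦ ?_
  rw [if_pos (mem_range.1 hi), sum_coe_sort s fun x ↦ f x ^ (m - i)]

namespace IsPrimitiveRoot

section Domain

variable {R : Type*} [CommRing R] [IsDomain R] [DecidableEq R] {k : ℕ} {ζ : R}

theorem prod_erase_one_X_sub_C (hζ : IsPrimitiveRoot ζ k) (hk : 0 < k) :
    ∏ ω ∈ (nthRootsFinset k (1 : R)).erase 1, (X - C ω)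
      = ∑ i ∈ range k, (X : R[X]) ^ i := by
  have h := X_pow_sub_one_eq_prod hk hζ
  rw [← mul_prod_erase _ _ (one_mem_nthRootsFinset hk), ← geom_sum_mul, mul_comm, C_1] at h
  exact mul_left_cancel₀ (X_sub_C_ne_zero 1) h.symm

theorem prod_erase_one_one_sub (hζ : IsPrimitiveRoot ζ k) (hk : 0 < k) :
    ∏ ω ∈ (nthRootsFinset k (1 : R)).erase 1, (1 - ω) = k := by
  simpa [eval_prod] using congrArg (eval 1) (hζ.prod_erase_one_X_sub_C hk)

theorem sum_Icc_pow_eq_sum_erase_one {M : Type*} [AddCommMonoid M] (hζ : IsPrimitiveRoot ζ k)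
    (hk : 0 < k) (f : R → M) :
    ∑ j ∈ Icc 1 (k - 1), f (ζ ^ j) = ∑ ω ∈ (nthRootsFinset k (1 : R)).erase 1, f ω := by
  have : NeZero k := ⟨hk.ne'⟩
  refine sum_nbij (ζ ^ ·) (fun j hj ↦ ?_) (fun i hi j hj hij ↦ ?_) (fun ω hω ↦ ?_)
    fun _ _ ↦ rfl
  · rw [mem_Icc] at hj
    refine mem_erase.2 ⟨hζ.pow_ne_one_of_pos_of_lt (by omega) (by omega),
      (Polynomial.mem_nthRootsFinset hk 1).2 ?_⟩
    rw [← pow_mul, mul_comm, pow_mul, hζ.pow_eq_one, one_pow]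
  · rw [coe_Icc, Set.mem_Icc] at hi hj
    exact hζ.pow_inj (by omega) (by omega) hij
  · rw [coe_erase, Set.mem_sdiff, mem_coe, Polynomial.mem_nthRootsFinset hk,
      Set.mem_singleton_iff] at hω
    obtain ⟨i, hik, rfl⟩ := hζ.eq_pow_of_pow_eq_one hω.1
    have hi : i ≠ 0 := by rintro rfl; exact hω.2 (pow_zero ζ)
    exact ⟨i, by rw [coe_Icc, Set.mem_Icc]; omega, rfl⟩

end Domain

section Field

variable {K : Type*} [Field K] [DecidableEq K] {k : ℕ} {ζ : K}

theorem prod_erase_one_sub_inv_one_sub (hζ : IsPrimitiveRoot ζ k) (hk : 0 < k) (x : K) :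
    ∏ ω ∈ (nthRootsFinset k (1 : K)).erase 1, (x - (1 - ω)⁻¹)
      = (x ^ k - (x - 1) ^ k) / k := by
  have hfactor : ∀ ω ∈ (nthRootsFinset k (1 : K)).erase 1,
      x - (1 - ω)⁻¹ = (x - 1 - ω * x) / (1 - ω) := fun ω hω ↦ by
    have : 1 - ω ≠ 0 := sub_ne_zero.2 (ne_of_mem_erase hω).symm
    field_simp
    ring
  have hnum := hζ.pow_sub_pow_eq_prod_sub_mul (x - 1) x hk
  rw [← mul_prod_erase _ _ (one_mem_nthRootsFinset hk), one_mul] at hnum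
  rw [prod_congr rfl hfactor, prod_div_distrib, hζ.prod_erase_one_one_sub hk]
  congr 1
  linear_combination hnum

theorem card_erase_one_nthRootsFinset (hζ : IsPrimitiveRoot ζ k) (hk : 0 < k) :
    #((nthRootsFinset k (1 : K)).erase 1) = k - 1 := by
  rw [card_erase_of_mem (one_mem_nthRootsFinset hk), hζ.card_nthRootsFinset]

variable [CharZero K]

theorem prod_erase_one_X_sub_C_inv_one_sub (hζ : IsPrimitiveRoot ζ k) (hk : 0 < k) :
    ∏ ω ∈ (nthRootsFinset k (1 : K)).erase 1, (X - C (1 - ω)⁻¹)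
      = C (k : K)⁻¹ * (X ^ k - (X - 1) ^ k) := by
  refine Polynomial.funext fun x ↦ ?_
  simp [eval_prod, hζ.prod_erase_one_sub_inv_one_sub hk, div_eq_inv_mul]

theorem esymm_inv_one_sub (hζ : IsPrimitiveRoot ζ k) (hk : 0 < k) (m : ℕ) :
    (((nthRootsFinset k (1 : K)).erase 1).val.map fun ω : K ↦ (1 - ω)⁻¹).esymm m
      = (k.choose (m + 1) : K) / k := by
  set t := ((nthRootsFinset k (1 : K)).erase 1).val.map fun ω : K ↦ (1 - ω)⁻¹
  have hcard : Multiset.card t = k - 1 := by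
    rw [Multiset.card_map]; exact hζ.card_erase_one_nthRootsFinset hk
  rcases le_or_gt m (k - 1) with hm | hm
  · have hcoeff := Multiset.prod_X_sub_C_coeff t (k := k - 1 - m) (by omega)
    have hprod : (t.map fun x ↦ X - C x).prod
        = ∏ ω ∈ (nthRootsFinset k (1 : K)).erase 1, (X - C (1 - ω)⁻¹) := by
      rw [Multiset.map_map]; rfl
    rw [hprod, hζ.prod_erase_one_X_sub_C_inv_one_sub hk, hcard,
      show k - 1 - (k - 1 - m) = m by omega] at hcoeff
    have hXsub : (X - 1 : K[X]) = X + C (-1) := by rw [C_neg, C_1, sub_eq_add_neg]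
    rw [coeff_C_mul, coeff_sub, coeff_X_pow, if_neg (by omega), hXsub, coeff_X_add_C_pow,
      show k - (k - 1 - m) = m + 1 by omega, show k - 1 - m = k - (m + 1) by omega,
      Nat.choose_symm (by omega)] at hcoeff
    have hk0 : (k : K) ≠ 0 := Nat.cast_ne_zero.2 hk.ne'
    apply mul_left_cancel₀ (pow_ne_zero m (neg_ne_zero.2 (one_ne_zero' K)))
    rw [← hcoeff]
    field_simp
    ring
  · rw [Multiset.esymm, Multiset.powersetCard_eq_empty _ (by omega),
      Nat.choose_eq_zero_of_lt (by omega)]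
    simp

theorem mul_choose_eq_sum_inv_one_sub_pow (hζ : IsPrimitiveRoot ζ k) (hk : 0 < k) (m : ℕ) :
    (m * k.choose (m + 1) : K) = (-1) ^ (m + 1) * ∑ i ∈ range m, (-1) ^ i * k.choose (i + 1) *
      ∑ ω ∈ (nthRootsFinset k (1 : K)).erase 1, (1 - ω)⁻¹ ^ (m - i) := by
  have h :=
    ((nthRootsFinset k (1 : K)).erase 1).mul_esymm_map_val_eq_sum (fun ω ↦ (1 - ω)⁻¹) m
  simp only [hζ.esymm_inv_one_sub hk, div_eq_mul_inv] at h
  apply mul_right_cancel₀ (inv_ne_zero (Nat.cast_ne_zero.2 hk.ne' : (k : K) ≠ 0))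
  rw [mul_assoc, h, mul_assoc, sum_mul]
  exact congrArg _ (sum_congr rfl fun i _ ↦ by ring)

theorem sum_inv_one_sub (hζ : IsPrimitiveRoot ζ k) (hk : 0 < k) :
    ∑ ω ∈ (nthRootsFinset k (1 : K)).erase 1, (1 - ω)⁻¹ = (k - 1) / 2 := by
  have h := hζ.mul_choose_eq_sum_inv_one_sub_pow hk 1
  norm_num [Nat.cast_choose_eq_descPochhammer_div, descPochhammer_succ_eval] at h
  apply mul_left_cancel₀ (Nat.cast_ne_zero.2 hk.ne' : (k : K) ≠ 0)
  linear_combination -h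

theorem sum_inv_one_sub_sq (hζ : IsPrimitiveRoot ζ k) (hk : 0 < k) :
    ∑ ω ∈ (nthRootsFinset k (1 : K)).erase 1, (1 - ω)⁻¹ ^ 2 = -(k - 1) * (k - 5) / 12 := by
  have h := hζ.mul_choose_eq_sum_inv_one_sub_pow hk 2
  -- `-inv_pow` keeps the power sums in the shape `(1 - ω)⁻¹ ^ n` of the lemmas rewritten with;
  -- the `i = 0` term of the identity is `k` times the power sum being computed.
  norm_num [sum_range_succ, Nat.cast_choose_eq_descPochhammer_div, descPochhammer_succ_eval,
    Nat.factorial, -inv_pow, hζ.sum_inv_one_sub hk] at h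
  apply mul_left_cancel₀ (Nat.cast_ne_zero.2 hk.ne' : (k : K) ≠ 0)
  linear_combination h

theorem sum_inv_one_sub_pow_three (hζ : IsPrimitiveRoot ζ k) (hk : 0 < k) :
    ∑ ω ∈ (nthRootsFinset k (1 : K)).erase 1, (1 - ω)⁻¹ ^ 3 = -(k - 1) * (k - 3) / 8 := by
  have h := hζ.mul_choose_eq_sum_inv_one_sub_pow hk 3
  norm_num [sum_range_succ, Nat.cast_choose_eq_descPochhammer_div, descPochhammer_succ_eval,
    Nat.factorial, -inv_pow, hζ.sum_inv_one_sub hk, hζ.sum_inv_one_sub_sq hk] at h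
  apply mul_left_cancel₀ (Nat.cast_ne_zero.2 hk.ne' : (k : K) ≠ 0)
  linear_combination -h

theorem sum_inv_one_sub_pow_four (hζ : IsPrimitiveRoot ζ k) (hk : 0 < k) :
    ∑ ω ∈ (nthRootsFinset k (1 : K)).erase 1, (1 - ω)⁻¹ ^ 4
      = (k ^ 4 - 110 * k ^ 2 + 360 * k - 251) / 720 := by
  have h := hζ.mul_choose_eq_sum_inv_one_sub_pow hk 4
  norm_num [sum_range_succ, Nat.cast_choose_eq_descPochhammer_div, descPochhammer_succ_eval,
    Nat.factorial, -inv_pow, hζ.sum_inv_one_sub hk, hζ.sum_inv_one_sub_sq hk,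
    hζ.sum_inv_one_sub_pow_three hk] at h
  apply mul_left_cancel₀ (Nat.cast_ne_zero.2 hk.ne' : (k : K) ≠ 0)
  linear_combination h

theorem sum_inv_one_sub_pow_five (hζ : IsPrimitiveRoot ζ k) (hk : 0 < k) :
    ∑ ω ∈ (nthRootsFinset k (1 : K)).erase 1, (1 - ω)⁻¹ ^ 5
      = (k ^ 4 - 50 * k ^ 2 + 144 * k - 95) / 288 := by
  have h := hζ.mul_choose_eq_sum_inv_one_sub_pow hk 5
  norm_num [sum_range_succ, Nat.cast_choose_eq_descPochhammer_div, descPochhammer_succ_eval,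
    Nat.factorial, -inv_pow, hζ.sum_inv_one_sub hk, hζ.sum_inv_one_sub_sq hk,
    hζ.sum_inv_one_sub_pow_three hk, hζ.sum_inv_one_sub_pow_four hk] at h
  apply mul_left_cancel₀ (Nat.cast_ne_zero.2 hk.ne' : (k : K) ≠ 0)
  linear_combination -h

theorem sum_inv_one_sub_pow_six (hζ : IsPrimitiveRoot ζ k) (hk : 0 < k) :
    ∑ ω ∈ (nthRootsFinset k (1 : K)).erase 1, (1 - ω)⁻¹ ^ 6
      = (-2 * k ^ 6 + 357 * k ^ 4 - 11508 * k ^ 2 + 30240 * k - 19087) / 60480 := by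
  have h := hζ.mul_choose_eq_sum_inv_one_sub_pow hk 6
  norm_num [sum_range_succ, Nat.cast_choose_eq_descPochhammer_div, descPochhammer_succ_eval,
    Nat.factorial, -inv_pow, hζ.sum_inv_one_sub hk, hζ.sum_inv_one_sub_sq hk,
    hζ.sum_inv_one_sub_pow_three hk, hζ.sum_inv_one_sub_pow_four hk,
    hζ.sum_inv_one_sub_pow_five hk] at h
  apply mul_left_cancel₀ (Nat.cast_ne_zero.2 hk.ne' : (k : K) ≠ 0)
  linear_combination h

theorem sum_inv_one_sub_sub_inv_sq_sq (hζ : IsPrimitiveRoot ζ k) (hk : 0 < k) :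
    ∑ ω ∈ (nthRootsFinset k (1 : K)).erase 1, ((1 - ω)⁻¹ - (1 - ω)⁻¹ ^ 2) ^ 2
      = (k ^ 4 + 10 * k ^ 2 - 11) / 720 := by
  simp only [show ∀ t : K, (t - t ^ 2) ^ 2 = t ^ 2 - 2 * t ^ 3 + t ^ 4 from fun t ↦ by ring]
  rw [sum_add_distrib, sum_sub_distrib, ← mul_sum, hζ.sum_inv_one_sub_sq hk,
    hζ.sum_inv_one_sub_pow_three hk, hζ.sum_inv_one_sub_pow_four hk]
  ring

theorem sum_inv_one_sub_sub_inv_sq_pow_three (hζ : IsPrimitiveRoot ζ k) (hk : 0 < k) :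
    ∑ ω ∈ (nthRootsFinset k (1 : K)).erase 1, ((1 - ω)⁻¹ - (1 - ω)⁻¹ ^ 2) ^ 3
      = (2 * k ^ 6 + 21 * k ^ 4 + 168 * k ^ 2 - 191) / 60480 := by
  simp only [show ∀ t : K, (t - t ^ 2) ^ 3 = t ^ 3 - 3 * t ^ 4 + 3 * t ^ 5 - t ^ 6
    from fun t ↦ by ring]
  rw [sum_sub_distrib, sum_add_distrib, sum_sub_distrib, ← mul_sum, ← mul_sum,
    hζ.sum_inv_one_sub_pow_three hk, hζ.sum_inv_one_sub_pow_four hk,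
    hζ.sum_inv_one_sub_pow_five hk, hζ.sum_inv_one_sub_pow_six hk]
  ring

end Field

end IsPrimitiveRoot

namespace Complex

theorem one_sub_exp_two_mul_I_sq (x : ℂ) :
    (1 - exp (2 * x * I)) ^ 2 = -4 * sin x ^ 2 * exp (2 * x * I) := by
  have hx : exp (x * I) ≠ 0 := exp_ne_zero _
  have h2 : exp (2 * x * I) = exp (x * I) ^ 2 := by rw [← exp_nat_mul]; ring_nf
  rw [sin, neg_mul x I, exp_neg, h2]
  field_simp
  linear_combination 4 * (1 - exp (x * I) ^ 2) ^ 2 * I_sq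

theorem inv_one_sub_exp_sub_inv_sq (x : ℂ) :
    (1 - exp (2 * x * I))⁻¹ - (1 - exp (2 * x * I))⁻¹ ^ 2 = (4 * sin x ^ 2)⁻¹ := by
  have hsq := one_sub_exp_two_mul_I_sq x
  rcases eq_or_ne (1 - exp (2 * x * I)) 0 with h0 | h0
  · have hsin : sin x ^ 2 = 0 := by simpa [h0, exp_ne_zero] using hsq
    simp [h0, hsin]
  · have hsin : sin x ≠ 0 := by
      rintro hs; simp [hs] at hsq; exact h0 hsq
    field_simp
    linear_combination -hsq

theorem ofReal_sum_Icc_inv_sin_sq_pow {k : ℕ} (hk : 0 < k) (n : ℕ) :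
    ((∑ j ∈ Icc 1 (k - 1), ((Real.sin (j * Real.pi / k) ^ 2)⁻¹) ^ n : ℝ) : ℂ)
      = 4 ^ n * ∑ ω ∈ (nthRootsFinset k (1 : ℂ)).erase 1,
        ((1 - ω)⁻¹ - (1 - ω)⁻¹ ^ 2) ^ n := by
  rw [← (isPrimitiveRoot_exp k hk.ne').sum_Icc_pow_eq_sum_erase_one hk, mul_sum,
    ofReal_sum]
  refine sum_congr rfl fun j _ ↦ ?_
  have harg : (j : ℂ) * (2 * Real.pi * I / k) = 2 * ↑(j * Real.pi / k : ℝ) * I := by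
    push_cast; ring
  rw [← exp_nat_mul, harg, inv_one_sub_exp_sub_inv_sq, ← mul_pow]
  push_cast
  ring

end Complex

open Real

theorem Real.sum_Icc_inv_sin_pow_four {k : ℕ} (hk : 0 < k) :
    ∑ j ∈ Icc 1 (k - 1), (sin (j * π / k) ^ 4)⁻¹
      = ((k : ℝ) ^ 4 - 1) / 45 + 2 * ((k : ℝ) ^ 2 - 1) / 9 := by
  simp only [show ∀ x : ℝ, (x ^ 4)⁻¹ = ((x ^ 2)⁻¹) ^ 2 from fun x ↦ by ring]
  apply Complex.ofReal_injective
  rw [Complex.ofReal_sum_Icc_inv_sin_sq_pow hk,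
    (Complex.isPrimitiveRoot_exp k hk.ne').sum_inv_one_sub_sub_inv_sq_sq hk]
  push_cast
  ring

theorem Real.sum_Icc_inv_sin_pow_six {k : ℕ} (hk : 0 < k) :
    ∑ j ∈ Icc 1 (k - 1), (sin (j * π / k) ^ 6)⁻¹
      = 2 * ((k : ℝ) ^ 6 - 1) / 945 + ((k : ℝ) ^ 4 - 1) / 45
        + 8 * ((k : ℝ) ^ 2 - 1) / 45 := by
  simp only [show ∀ x : ℝ, (x ^ 6)⁻¹ = ((x ^ 2)⁻¹) ^ 3 from fun x ↦ by ring]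
  apply Complex.ofReal_injective
  rw [Complex.ofReal_sum_Icc_inv_sin_sq_pow hk,
    (Complex.isPrimitiveRoot_exp k hk.ne').sum_inv_one_sub_sub_inv_sq_pow_three hk]
  push_cast
  ring

theorem stmt_7 (k : ℕ) (hk : 2 ≤ k) (s : ℕ → ℝ)
    (hs : ∀ j, s j = Real.sin (j * Real.pi / k)) :
    ((1 : ℝ) / k) * ∑ j ∈ Finset.Icc 1 (k - 1),
        (12 / (64 * s j ^ 6) - 2 / (16 * s j ^ 4))
      = (1 / 2520) * ((k : ℝ) ^ 5 - 1 / k) + (1 / 720) * ((k : ℝ) ^ 3 - 1 / k)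
        + (1 / 180) * ((k : ℝ) - 1 / k) ∧
    ((1 : ℝ) / k) * ∑ j ∈ Finset.Icc 1 (k - 1), (2 / (64 * s j ^ 6))
      = (1 / 15120) * ((k : ℝ) ^ 5 - 1 / k) + (1 / 1440) * ((k : ℝ) ^ 3 - 1 / k)
        + (1 / 180) * ((k : ℝ) - 1 / k) := by
  have hk0 : (k : ℝ) ≠ 0 := Nat.cast_ne_zero.2 (by omega)
  have h4 := sum_Icc_inv_sin_pow_four (k := k) (by omega)
  have h6 := sum_Icc_inv_sin_pow_six (k := k) (by omega)
  have hsum₁ : ∑ j ∈ Icc 1 (k - 1), (12 / (64 * s j ^ 6) - 2 / (16 * s j ^ 4))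
      = 3 / 16 * ∑ j ∈ Icc 1 (k - 1), (sin (j * π / k) ^ 6)⁻¹
        - 1 / 8 * ∑ j ∈ Icc 1 (k - 1), (sin (j * π / k) ^ 4)⁻¹ := by
    rw [mul_sum, mul_sum, ← sum_sub_distrib]
    exact sum_congr rfl fun j _ ↦ by rw [hs]; ring
  have hsum₂ : ∑ j ∈ Icc 1 (k - 1), 2 / (64 * s j ^ 6)
      = 1 / 32 * ∑ j ∈ Icc 1 (k - 1), (sin (j * π / k) ^ 6)⁻¹ := by
    rw [mul_sum]
    exact sum_congr rfl fun j _ ↦ by rw [hs]; ring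
  rw [hsum₁, hsum₂, h4, h6]
  constructor <;> field_simp <;> ring
end

section
/- Let k ≥ 2 be an integer. Then (1/k)·∑_{j=1}^{k−1} 1/(2 − 2cos(2πj/k)) = (1/12)(k − 1/k). -/
/-!
For a `k`-th root of unity `w ≠ 1` one has `(1 - w) * F w = -k` with `F w = ∑_{m<k} m w^m`, and
`2 - 2 cos (2πj/k) = (1 - w) (1 - w⁻¹)` for `w = exp (2πij/k)`; hence each summand equals
`F w * F w⁻¹ / k²`. Summed over all `k`-th roots of unity, orthogonality (Parseval)
turns `∑ F w * F w⁻¹` into `k ∑_{m<k} m²`; removing the term `F 1 ^ 2 = (∑_{m<k} m)²` of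
`w = 1` leaves `(k ∑ m² - (∑ m)²) / k² = (k² - 1) / 12`.
-/

open Real Finset

theorem one_sub_mul_sum_range_natCast_mul_pow {R : Type*} [CommRing R] (w : R) (n : ℕ) :
    (1 - w) * ∑ m ∈ range n, (m : R) * w ^ m = w * ∑ m ∈ range n, w ^ m - n * w ^ n := by
  induction n with
  | zero => simp
  | succ n ih =>
    rw [sum_range_succ, sum_range_succ, mul_add, ih]
    push_cast
    ring

theorem natCast_sum_range_mul_two {R : Type*} [CommRing R] (n : ℕ) :
    (∑ m ∈ range n, (m : R)) * 2 = n * (n - 1) := by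
  induction n with
  | zero => simp
  | succ n ih => rw [sum_range_succ, add_mul, ih]; push_cast; ring

theorem natCast_sum_range_sq_mul_six {R : Type*} [CommRing R] (n : ℕ) :
    (∑ m ∈ range n, (m : R) ^ 2) * 6 = n * (n - 1) * (2 * n - 1) := by
  induction n with
  | zero => simp
  | succ n ih => rw [sum_range_succ, add_mul, ih]; push_cast; ring

theorem natCast_mul_sum_range_sq_sub_sq_mul_twelve {R : Type*} [CommRing R] (n : ℕ) :
    (n * ∑ m ∈ range n, (m : R) ^ 2 - (∑ m ∈ range n, (m : R)) ^ 2) * 12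
      = n ^ 2 * (n ^ 2 - 1) := by
  linear_combination (2 * (n : R)) * natCast_sum_range_sq_mul_six (R := R) n -
    (3 * ((∑ m ∈ range n, (m : R)) * 2 + n * (n - 1))) * natCast_sum_range_mul_two (R := R) n

section Field

variable {K : Type*} [Field K] {k : ℕ}

theorem geom_sum_eq_zero_of_pow_eq_one {w : K} (hw : w ^ k = 1) (h1 : w ≠ 1) :
    ∑ j ∈ range k, w ^ j = 0 := by
  rw [geom_sum_eq h1, hw, sub_self, zero_div]

theorem one_sub_mul_sum_range_natCast_mul_pow_of_pow_eq_one {w : K} (hw : w ^ k = 1)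
    (h1 : w ≠ 1) : (1 - w) * ∑ m ∈ range k, (m : K) * w ^ m = -k := by
  rw [one_sub_mul_sum_range_natCast_mul_pow, geom_sum_eq_zero_of_pow_eq_one hw h1, hw]
  ring

theorem inv_two_sub_add_inv_of_pow_eq_one {w : K} (hw : w ^ k = 1) (h1 : w ≠ 1)
    (hk : (k : K) ≠ 0) :
    (2 - (w + w⁻¹))⁻¹ = (∑ m ∈ range k, (m : K) * w ^ m) *
      (∑ m ∈ range k, (m : K) * w⁻¹ ^ m) / (k : K) ^ 2 := by
  have hw0 : w ≠ 0 := by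
    rintro rfl
    rw [zero_pow (by rintro rfl; simp at hk)] at hw
    exact zero_ne_one hw
  have h1' : w⁻¹ ≠ 1 := inv_ne_one.mpr h1
  have hfactor : 2 - (w + w⁻¹) = (1 - w) * (1 - w⁻¹) := by field_simp; ring
  have hne : 2 - (w + w⁻¹) ≠ 0 := by
    rw [hfactor]
    exact mul_ne_zero (sub_ne_zero.mpr h1.symm) (sub_ne_zero.mpr h1'.symm)
  rw [eq_div_iff (pow_ne_zero 2 hk), inv_mul_eq_iff_eq_mul₀ hne]
  linear_combination (-(1 - w⁻¹) * ∑ m ∈ range k, (m : K) * w⁻¹ ^ m) *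
      one_sub_mul_sum_range_natCast_mul_pow_of_pow_eq_one hw h1 +
    (k : K) * one_sub_mul_sum_range_natCast_mul_pow_of_pow_eq_one
      (by rw [inv_pow, hw, inv_one]) h1' -
    ((∑ m ∈ range k, (m : K) * w ^ m) * ∑ m ∈ range k, (m : K) * w⁻¹ ^ m) * hfactor

theorem IsPrimitiveRoot.sum_range_pow_mul_inv_pow {ζ : K} (hζ : IsPrimitiveRoot ζ k) {m n : ℕ}
    (hm : m < k) (hn : n < k) :
    ∑ j ∈ range k, (ζ ^ m * (ζ ^ n)⁻¹) ^ j = if m = n then (k : K) else 0 := by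
  have hζ0 : ζ ≠ 0 := hζ.ne_zero (by omega)
  split_ifs with hmn
  · simp [hmn, pow_ne_zero n hζ0]
  refine geom_sum_eq_zero_of_pow_eq_one ?_ ?_
  · rw [mul_pow, inv_pow, ← pow_mul, ← pow_mul, mul_comm m, mul_comm n, pow_mul, pow_mul,
      hζ.pow_eq_one, one_pow, one_pow, inv_one, mul_one]
  · rw [Ne, mul_inv_eq_one₀ (pow_ne_zero _ hζ0)]
    exact fun h => hmn (hζ.pow_inj hm hn h)

theorem IsPrimitiveRoot.sum_range_mul_sum_inv {ζ : K} (hζ : IsPrimitiveRoot ζ k)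
    (a b : ℕ → K) :
    ∑ j ∈ range k,
        (∑ m ∈ range k, a m * (ζ ^ j) ^ m) * (∑ n ∈ range k, b n * (ζ ^ j)⁻¹ ^ n)
      = k * ∑ m ∈ range k, a m * b m := by
  have hpow : ∀ j m n : ℕ, (ζ ^ j) ^ m * (ζ ^ j)⁻¹ ^ n = (ζ ^ m * (ζ ^ n)⁻¹) ^ j := by
    intro j m n
    rw [mul_pow, inv_pow, inv_pow, ← pow_mul, ← pow_mul, ← pow_mul, ← pow_mul, mul_comm j m,
      mul_comm j n]
  calc _ = ∑ m ∈ range k, ∑ n ∈ range k,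
          a m * b n * ∑ j ∈ range k, (ζ ^ m * (ζ ^ n)⁻¹) ^ j := by
        simp_rw [sum_mul_sum, mul_sum]
        rw [sum_comm]
        refine sum_congr rfl fun m _ => ?_
        rw [sum_comm]
        refine sum_congr rfl fun n _ => sum_congr rfl fun j _ => ?_
        rw [← hpow]
        ring
    _ = ∑ m ∈ range k, ∑ n ∈ range k, a m * b n * if m = n then (k : K) else 0 :=
        sum_congr rfl fun m hm => sum_congr rfl fun n hn => by
          rw [hζ.sum_range_pow_mul_inv_pow (mem_range.mp hm) (mem_range.mp hn)]
    _ = k * ∑ m ∈ range k, a m * b m := by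
        simp only [mul_ite, mul_zero, sum_ite_eq, mem_range, mul_sum]
        exact sum_congr rfl fun m hm => by rw [if_pos (mem_range.mp hm)]; ring

theorem IsPrimitiveRoot.sum_Icc_inv_two_sub_pow_add_inv_pow [CharZero K] {ζ : K}
    (hζ : IsPrimitiveRoot ζ k) (hk : k ≠ 0) :
    ∑ j ∈ Icc 1 (k - 1), (2 - (ζ ^ j + (ζ ^ j)⁻¹))⁻¹ = ((k : K) ^ 2 - 1) / 12 := by
  set F : K → K := fun w => ∑ m ∈ range k, (m : K) * w ^ m
  have hkK : (k : K) ≠ 0 := Nat.cast_ne_zero.mpr hk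
  have hterm : ∀ j ∈ Icc 1 (k - 1),
      (2 - (ζ ^ j + (ζ ^ j)⁻¹))⁻¹ = F (ζ ^ j) * F (ζ ^ j)⁻¹ / k ^ 2 := by
    intro j hj
    rw [mem_Icc] at hj
    exact inv_two_sub_add_inv_of_pow_eq_one
      (by rw [← pow_mul, mul_comm, pow_mul, hζ.pow_eq_one, one_pow])
      (hζ.pow_ne_one_of_pos_of_lt (by omega) (by omega)) hkK
  have hsplit : ∑ j ∈ range k, F (ζ ^ j) * F (ζ ^ j)⁻¹
      = F 1 * F 1 + ∑ j ∈ Icc 1 (k - 1), F (ζ ^ j) * F (ζ ^ j)⁻¹ := by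
    rw [range_eq_Ico, sum_eq_sum_Ico_succ_bot (by omega)]
    simp [show Icc 1 (k - 1) = Ico 1 k by ext; simp; omega]
  have hF1 : F 1 = ∑ m ∈ range k, (m : K) := by simp [F]
  have hparseval :
      ∑ j ∈ range k, F (ζ ^ j) * F (ζ ^ j)⁻¹ = k * ∑ m ∈ range k, (m : K) ^ 2 := by
    simpa only [← sq] using hζ.sum_range_mul_sum_inv (fun m => (m : K)) (fun m => (m : K))
  rw [sum_congr rfl hterm, ← sum_div, div_eq_div_iff (pow_ne_zero 2 hkK) (by norm_num)]
  rw [hF1] at hsplit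
  linear_combination (-12 : K) * hsplit + 12 * hparseval +
    natCast_mul_sum_range_sq_sub_sq_mul_twelve (R := K) k

end Field

theorem Complex.ofReal_two_mul_cos_eq_exp_add_inv (θ : ℝ) :
    ((2 * Real.cos θ : ℝ) : ℂ)
      = Complex.exp (θ * Complex.I) + (Complex.exp (θ * Complex.I))⁻¹ := by
  push_cast
  rw [Complex.two_cos, ← Complex.exp_neg, neg_mul]

theorem stmt_8 (k : ℕ) (hk : 2 ≤ k) :
    ((1 : ℝ) / k) * ∑ j ∈ Finset.Icc 1 (k - 1),
        (1 / (2 - 2 * Real.cos (2 * Real.pi * j / k)))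
      = (1 / 12) * ((k : ℝ) - 1 / k) := by
  have hk0 : k ≠ 0 := by omega
  have hζ := Complex.isPrimitiveRoot_exp k hk0
  have hpow : ∀ j : ℕ, Complex.exp (2 * π * Complex.I / k) ^ j
      = Complex.exp ((2 * π * j / k : ℝ) * Complex.I) := by
    intro j
    rw [← Complex.exp_nat_mul]
    push_cast
    ring_nf
  have hsum :
      ∑ j ∈ Icc 1 (k - 1), 1 / (2 - 2 * cos (2 * π * j / k)) = ((k : ℝ) ^ 2 - 1) / 12 := by
    apply Complex.ofReal_injective
    simp only [Complex.ofReal_sum, one_div, Complex.ofReal_inv, Complex.ofReal_sub,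
      Complex.ofReal_two_mul_cos_eq_exp_add_inv, ← hpow]
    push_cast
    exact hζ.sum_Icc_inv_two_sub_pow_add_inv_pow hk0
  rw [hsum]
  field_simp
end

section
/- Let k ≥ 2 be an integer. Then (1/k)·∑_{j=1}^{k−1} 2/(2 − 2cos(2πj/k))² = (1/360)(k³ − 1/k) + (1/36)(k − 1/k). -/
/-!
For `k ≥ 1` let `g(m) = (k² - 1 - 6m(k - m)) / (12k)`. Viewed on `ℤ/kℤ`, `g` is the mean-zero
Green's function of the Laplacian of the `k`-cycle: `2g(m) - g(m-1) - g(m+1) = δ₀(m) - 1/k`.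
Consequently its discrete Fourier transform `ĝ(z) = ∑ g(m) zᵐ` vanishes at `z = 1` and equals
`1 / (2 - z - z⁻¹)` at every other `k`-th root of unity `z`; for `z = exp(2πij/k)` this is
`1 / (2 - 2 cos(2πj/k))`. Parseval's identity `∑_z ĝ(z) ĝ(z⁻¹) = k ∑ g(m)²` turns the sum of the
squares of these values into a sum of a polynomial in `m`, evaluated by the power-sum formulas.
-/

open Real Finset

lemma geom_sum_eq_zero_of_pow_eq_one_s9 {R : Type*} [CommRing R] [IsDomain R] {z : R} {n : ℕ}
    (hz : z ^ n = 1) (hz1 : z ≠ 1) : ∑ i ∈ range n, z ^ i = 0 := by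
  have h := geom_sum_mul z n
  rw [hz, sub_self, mul_eq_zero] at h
  exact h.resolve_right (sub_ne_zero.mpr hz1)

lemma IsPrimitiveRoot.sum_zpow_pow {K : Type*} [Field K] {ζ : K} {k : ℕ}
    (hζ : IsPrimitiveRoot ζ k) (l : ℤ) :
    ∑ j ∈ range k, (ζ ^ l) ^ j = if (k : ℤ) ∣ l then (k : K) else 0 := by
  split_ifs with h
  · simp [(hζ.zpow_eq_one_iff_dvd l).mpr h]
  · refine geom_sum_eq_zero_of_pow_eq_one_s9 ?_ (mt (hζ.zpow_eq_one_iff_dvd l).mp h)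
    rw [← zpow_natCast, ← zpow_mul, mul_comm, zpow_mul, zpow_natCast, hζ.pow_eq_one, one_zpow]

lemma IsPrimitiveRoot.sum_pow_mul_inv_pow {K : Type*} [Field K] {ζ : K} {k : ℕ}
    (hζ : IsPrimitiveRoot ζ k) {m n : ℕ} (hm : m < k) (hn : n < k) :
    ∑ j ∈ range k, (ζ ^ j) ^ m * ((ζ ^ j)⁻¹) ^ n = if m = n then (k : K) else 0 := by
  have hζ0 : ζ ≠ 0 := hζ.ne_zero (by omega)
  have hpow : ∀ j : ℕ, (ζ ^ j) ^ m * ((ζ ^ j)⁻¹) ^ n = (ζ ^ ((m : ℤ) - n)) ^ j := by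
    intro j
    rw [zpow_sub₀ hζ0, zpow_natCast, zpow_natCast]
    field_simp
    ring
  have hdvd : (k : ℤ) ∣ (m : ℤ) - n ↔ m = n := by
    refine ⟨fun h => ?_, fun h => by simp [h]⟩
    have := Int.eq_zero_of_abs_lt_dvd h (by rw [abs_lt]; omega)
    omega
  simp only [hpow, hζ.sum_zpow_pow, hdvd]

theorem IsPrimitiveRoot.sum_mul_sum_inv {K : Type*} [Field K] {ζ : K} {k : ℕ}
    (hζ : IsPrimitiveRoot ζ k) (f g : ℕ → K) :
    ∑ j ∈ range k, (∑ m ∈ range k, f m * (ζ ^ j) ^ m) * (∑ n ∈ range k, g n * ((ζ ^ j)⁻¹) ^ n)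
      = k * ∑ m ∈ range k, f m * g m := by
  calc _ = ∑ j ∈ range k, ∑ m ∈ range k, ∑ n ∈ range k,
          f m * g n * ((ζ ^ j) ^ m * ((ζ ^ j)⁻¹) ^ n) := by
        refine sum_congr rfl fun j _ => ?_
        rw [sum_mul_sum]
        exact sum_congr rfl fun m _ => sum_congr rfl fun n _ => by ring
    _ = ∑ m ∈ range k, ∑ n ∈ range k,
          f m * g n * ∑ j ∈ range k, (ζ ^ j) ^ m * ((ζ ^ j)⁻¹) ^ n := by
        rw [sum_comm]
        refine sum_congr rfl fun m _ => ?_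
        rw [sum_comm]
        simp only [mul_sum]
    _ = ∑ m ∈ range k, f m * g m * k := by
        refine sum_congr rfl fun m hm => ?_
        rw [sum_eq_single m, hζ.sum_pow_mul_inv_pow (mem_range.mp hm) (mem_range.mp hm), if_pos rfl]
        · intro n hn hnm
          rw [hζ.sum_pow_mul_inv_pow (mem_range.mp hm) (mem_range.mp hn), if_neg (Ne.symm hnm),
            mul_zero]
        · exact fun h => absurd hm h
    _ = _ := by rw [← sum_mul, mul_comm]

lemma one_sub_mul_sum_range_mul_pow {R : Type*} [CommRing R] (f : ℕ → R) (z : R) (n : ℕ) :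
    (1 - z) * ∑ m ∈ range n, f m * z ^ m
      = f 0 - f n * z ^ n + z * ∑ m ∈ range n, (f (m + 1) - f m) * z ^ m := by
  induction n with
  | zero => simp
  | succ n ih =>
    rw [sum_range_succ, sum_range_succ, mul_add, ih]
    ring

section
variable {R : Type*} [CommRing R]

lemma sum_range_natCast_mul_two (n : ℕ) : (∑ m ∈ range n, (m : R)) * 2 = n * (n - 1) := by
  induction n with
  | zero => simp
  | succ n ih => rw [sum_range_succ, add_mul, ih]; push_cast; ring

lemma sum_range_natCast_sq_mul_six (n : ℕ) :
    (∑ m ∈ range n, (m : R) ^ 2) * 6 = n * (n - 1) * (2 * n - 1) := by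
  induction n with
  | zero => simp
  | succ n ih => rw [sum_range_succ, add_mul, ih]; push_cast; ring

lemma sum_range_natCast_cube_mul_four (n : ℕ) :
    (∑ m ∈ range n, (m : R) ^ 3) * 4 = (n * (n - 1)) ^ 2 := by
  induction n with
  | zero => simp
  | succ n ih => rw [sum_range_succ, add_mul, ih]; push_cast; ring

lemma sum_range_natCast_pow_four_mul_thirty (n : ℕ) :
    (∑ m ∈ range n, (m : R) ^ 4) * 30 = n * (n - 1) * (2 * n - 1) * (3 * n ^ 2 - 3 * n - 1) := by
  induction n with
  | zero => simp
  | succ n ih => rw [sum_range_succ, add_mul, ih]; push_cast; ring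

end

def cycleGreen (K : Type*) [Field K] (k m : ℕ) : K :=
  ((k : K) ^ 2 - 1 - 6 * m * (k - m)) / (12 * k)

section
variable {K : Type*} [Field K]

lemma sum_range_cycleGreen (k : ℕ) : ∑ m ∈ range k, cycleGreen K k m = 0 := by
  have h1 := sum_range_natCast_mul_two (R := K) k
  have h2 := sum_range_natCast_sq_mul_six (R := K) k
  have hnum : ∑ m ∈ range k, ((k : K) ^ 2 - 1 - 6 * m * (k - m)) = 0 := by
    simp only [show ∀ m : ℕ, (k : K) ^ 2 - 1 - 6 * m * (k - m) = (k ^ 2 - 1) - 6 * k * m + 6 * m ^ 2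
      from fun m => by ring, sum_add_distrib, sum_sub_distrib, sum_const, card_range, nsmul_eq_mul,
      ← mul_sum]
    linear_combination (-3 * (k : K)) * h1 + h2
  simp only [cycleGreen, ← sum_div, hnum, zero_div]

variable [CharZero K]

lemma sum_range_cycleGreen_sq (k : ℕ) :
    ∑ m ∈ range k, cycleGreen K k m ^ 2 = ((k : K) ^ 4 + 10 * k ^ 2 - 11) / (720 * k) := by
  obtain rfl | hk := eq_or_ne k 0
  · simp
  have hk' : (k : K) ≠ 0 := Nat.cast_ne_zero.mpr hk
  have h1 := sum_range_natCast_mul_two (R := K) k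
  have h2 := sum_range_natCast_sq_mul_six (R := K) k
  have h3 := sum_range_natCast_cube_mul_four (R := K) k
  have h4 := sum_range_natCast_pow_four_mul_thirty (R := K) k
  have hnum : (∑ m ∈ range k, ((k : K) ^ 2 - 1 - 6 * m * (k - m)) ^ 2) * 5
      = (k : K) * ((k : K) ^ 4 + 10 * k ^ 2 - 11) := by
    simp only [sum_mul, show ∀ m : ℕ, ((k : K) ^ 2 - 1 - 6 * m * (k - m)) ^ 2 * 5
      = 5 * (k ^ 2 - 1) ^ 2 - 60 * (k ^ 3 - k) * m + (240 * k ^ 2 - 60) * m ^ 2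
        - 360 * k * m ^ 3 + 180 * m ^ 4
      from fun m => by ring, sum_add_distrib, sum_sub_distrib, sum_const, card_range, nsmul_eq_mul,
      ← mul_sum]
    linear_combination (-30 * ((k : K) ^ 3 - k)) * h1 + (40 * (k : K) ^ 2 - 10) * h2
      - 90 * (k : K) * h3 + 6 * h4
  simp only [cycleGreen, div_pow, ← sum_div]
  rw [div_eq_div_iff (by simpa using hk') (by simpa using hk')]
  linear_combination 144 * (k : K) * hnum

lemma cycleGreen_succ_sub (k m : ℕ) (hk : (k : K) ≠ 0) :
    cycleGreen K k (m + 1) - cycleGreen K k m = (2 * m + 1 - k) / (2 * k) := by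
  simp only [cycleGreen]
  field_simp
  push_cast
  ring

theorem two_sub_sub_inv_mul_sum_cycleGreen {k : ℕ} (hk : k ≠ 0) {z : K} (hz : z ^ k = 1)
    (hz1 : z ≠ 1) : (2 - z - z⁻¹) * ∑ m ∈ range k, cycleGreen K k m * z ^ m = 1 := by
  have hk' : (k : K) ≠ 0 := Nat.cast_ne_zero.mpr hk
  have hz0 : z ≠ 0 := by rintro rfl; simp [zero_pow hk] at hz
  -- Two summations by parts: `Δg` is affine with `Δ²g = 1/k`, and `∑ zᵐ = 0`.
  set Δg : ℕ → K := fun m => (2 * m + 1 - k) / (2 * k)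
  have hP := one_sub_mul_sum_range_mul_pow (cycleGreen K k) z k
  have hQ := one_sub_mul_sum_range_mul_pow Δg z k
  have hΔΔ : ∀ m, Δg (m + 1) - Δg m = 1 / k := fun m => by
    simp only [Δg]; field_simp; push_cast; ring
  simp only [cycleGreen_succ_sub _ _ hk', hz, mul_one] at hP
  simp only [hΔΔ, hz, mul_one, ← mul_sum, geom_sum_eq_zero_of_pow_eq_one_s9 hz hz1] at hQ
  set P := ∑ m ∈ range k, cycleGreen K k m * z ^ m
  set Q := ∑ m ∈ range k, Δg m * z ^ m
  replace hP : (1 - z) * P = z * Q := by rw [hP]; simp [cycleGreen, Q, Δg]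
  replace hQ : (1 - z) * Q = -1 := by rw [hQ]; simp only [Δg]; field_simp; push_cast; ring
  calc (2 - z - z⁻¹) * P = -z⁻¹ * (1 - z) * ((1 - z) * P) := by field_simp; ring
    _ = -((1 - z) * Q) := by rw [hP]; field_simp
    _ = 1 := by rw [hQ, neg_neg]
end

theorem IsPrimitiveRoot.sum_inv_two_sub_pow_sub_inv_pow_sq {K : Type*} [Field K] [CharZero K]
    {ζ : K} {k : ℕ} (hζ : IsPrimitiveRoot ζ k) (hk : k ≠ 0) :
    ∑ j ∈ Icc 1 (k - 1), ((2 - ζ ^ j - (ζ ^ j)⁻¹) ^ 2)⁻¹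
      = ((k : K) ^ 4 + 10 * k ^ 2 - 11) / 720 := by
  set P : K → K := fun z => ∑ m ∈ range k, cycleGreen K k m * z ^ m
  have hterm : ∀ j ∈ Icc 1 (k - 1), ((2 - ζ ^ j - (ζ ^ j)⁻¹) ^ 2)⁻¹ = P (ζ ^ j) * P (ζ ^ j)⁻¹ := by
    intro j hj
    obtain ⟨hj1, hjk⟩ := mem_Icc.mp hj
    have hz : (ζ ^ j) ^ k = 1 := by rw [pow_right_comm, hζ.pow_eq_one, one_pow]
    have hz1 : ζ ^ j ≠ 1 := hζ.pow_ne_one_of_pos_of_lt (by omega) (by omega)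
    have hP := two_sub_sub_inv_mul_sum_cycleGreen hk hz hz1
    have hP' := two_sub_sub_inv_mul_sum_cycleGreen hk (by rw [inv_pow, hz, inv_one])
      (inv_ne_one.mpr hz1)
    rw [inv_inv] at hP'
    simp only [P]
    rw [eq_inv_of_mul_eq_one_right hP, eq_inv_of_mul_eq_one_right hP', ← mul_inv]
    congr 1
    ring
  have hsplit : range k = insert 0 (Icc 1 (k - 1)) := by
    ext j; simp only [mem_range, mem_insert, mem_Icc]; omega
  have hP1 : P 1 = 0 := by simp [P, sum_range_cycleGreen]
  calc ∑ j ∈ Icc 1 (k - 1), ((2 - ζ ^ j - (ζ ^ j)⁻¹) ^ 2)⁻¹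
      = ∑ j ∈ range k, P (ζ ^ j) * P (ζ ^ j)⁻¹ := by
        rw [sum_congr rfl hterm, hsplit, sum_insert (by simp)]
        simp [hP1]
    _ = k * ∑ m ∈ range k, cycleGreen K k m ^ 2 := by
        simp only [P, hζ.sum_mul_sum_inv, sq]
    _ = ((k : K) ^ 4 + 10 * k ^ 2 - 11) / 720 := by
        rw [sum_range_cycleGreen_sq]
        field_simp

lemma Complex.ofReal_two_sub_two_cos (θ : ℝ) :
    ((2 - 2 * Real.cos θ : ℝ) : ℂ) = 2 - exp (θ * I) - (exp (θ * I))⁻¹ := by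
  rw [← Complex.exp_neg]
  push_cast
  rw [Complex.two_cos]
  ring_nf

theorem stmt_9 (k : ℕ) (hk : 2 ≤ k) :
    ((1 : ℝ) / k) * ∑ j ∈ Finset.Icc 1 (k - 1),
        (2 / (2 - 2 * Real.cos (2 * Real.pi * j / k)) ^ 2)
      = (1 / 360) * ((k : ℝ) ^ 3 - 1 / k) + (1 / 36) * ((k : ℝ) - 1 / k) := by
  have hk0 : k ≠ 0 := by omega
  set ζ := Complex.exp (2 * π * Complex.I / k)
  have hcos : ∀ j : ℕ, ((2 - 2 * Real.cos (2 * π * j / k) : ℝ) : ℂ) = 2 - ζ ^ j - (ζ ^ j)⁻¹ := by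
    intro j
    rw [Complex.ofReal_two_sub_two_cos, ← Complex.exp_nat_mul]
    push_cast
    ring_nf
  have hsum : ∑ j ∈ Icc 1 (k - 1), ((2 - 2 * Real.cos (2 * π * j / k)) ^ 2)⁻¹
      = ((k : ℝ) ^ 4 + 10 * k ^ 2 - 11) / 720 := by
    apply Complex.ofReal_injective
    rw [Complex.ofReal_sum]
    simp only [Complex.ofReal_inv, Complex.ofReal_pow, hcos]
    push_cast
    exact (Complex.isPrimitiveRoot_exp k hk0).sum_inv_two_sub_pow_sub_inv_pow_sq hk0
  calc ((1 : ℝ) / k) * ∑ j ∈ Icc 1 (k - 1), 2 / (2 - 2 * Real.cos (2 * π * j / k)) ^ 2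
      = 2 / k * ∑ j ∈ Icc 1 (k - 1), ((2 - 2 * Real.cos (2 * π * j / k)) ^ 2)⁻¹ := by
        rw [mul_sum, mul_sum]
        exact sum_congr rfl fun j _ => by ring
    _ = _ := by
        rw [hsum]
        field_simp
        ring
end
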